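/- arXiv:2209.05119 — 2 statements merged into one kernel-verified Lean document; each statement's English description precedes it below -/
import Mathlib

section
/- Let b_n = a_n / n^{log_s p}. For any positive integer n and any positive integer ℓ with 1 - s^{-ℓ} > log_p s, one has b_{s^ℓ n + s^ℓ - 1} < b_n. -/
/-!
Write `α = log_s p` and `m = s^ℓ n + s^ℓ - 1`. The `s`-ary expansion of `m` is that of `n` followed
by `ℓ` digits `s - 1`, so `a_m < p^ℓ (a_n + 1)`, while `m = s^ℓ (n + t)` with `t = 1 - s^{-ℓ}` gives
`m^α = p^ℓ (n + t)^α`. The claim thus reduces to `(a_n + 1) n^α ≤ a_n (n + t)^α`, which follows from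
Bernoulli's inequality `(n + t)^α ≥ n^α (1 + α t / n)`, the bound `a_n ≥ n` (as `h d ≥ d`) and
`α t > 1`, the hypothesis on `ℓ`.
-/

open Real Filter Set MeasureTheory Topology
open scoped Classical ENNReal

/-- The Cantor-integer function: apply the digit map `h` to the `s`-ary digits of `n`
and read the result in base `p`. -/
def cantorInt (p s : ℕ) (h : ℕ → ℕ) (n : ℕ) : ℕ :=
  (Nat.digits s n).foldr (fun d acc => h d + p * acc) 0

/-- `b n = a n / n ^ (log_s p)`. -/
noncomputable def cantorB (p s : ℕ) (h : ℕ → ℕ) (n : ℕ) : ℝ :=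
  (cantorInt p s h n : ℝ) / (n : ℝ) ^ Real.logb s p

/-- `a(x) = a_⌊x⌋`. -/
noncomputable def cantorA (p s : ℕ) (h : ℕ → ℕ) (x : ℝ) : ℝ :=
  (cantorInt p s h ⌊x⌋₊ : ℝ)

namespace Nat

theorem digits_pow_sub_one {b : ℕ} (hb : 1 < b) (k : ℕ) :
    digits b (b ^ k - 1) = List.replicate k (b - 1) := by
  induction k with
  | zero => simp
  | succ k ih =>
    have hk : 1 ≤ b ^ k := one_le_pow _ _ (by omega)
    have hsplit : b ^ (k + 1) - 1 = (b - 1) + b * (b ^ k - 1) := by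
      rw [pow_succ', Nat.mul_sub, mul_one]
      have : b ≤ b * b ^ k := Nat.le_mul_of_pos_right b hk
      omega
    rw [hsplit, digits_add b hb _ _ (by omega) (by omega), ih, List.replicate_succ]

theorem digits_pow_mul_add_pow_sub_one {b : ℕ} (hb : 1 < b) (k n : ℕ) :
    digits b (b ^ k * n + b ^ k - 1) = List.replicate k (b - 1) ++ digits b n := by
  have hk : 1 ≤ b ^ k := one_le_pow _ _ (by omega)
  have hrepl := digits_pow_sub_one hb k
  rw [← hrepl, digits_append_digits (by omega), hrepl, List.length_replicate]
  congr 1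
  omega

end Nat

section CantorInt

variable {p s : ℕ} (h : ℕ → ℕ)

theorem foldr_replicate_append (d k : ℕ) (L : List ℕ) :
    (List.replicate k d ++ L).foldr (fun d acc => h d + p * acc) 0 =
      h d * ∑ i ∈ Finset.range k, p ^ i + p ^ k * L.foldr (fun d acc => h d + p * acc) 0 := by
  induction k with
  | zero => simp
  | succ k ih =>
    rw [List.replicate_succ, List.cons_append, List.foldr_cons, ih, geom_sum_succ]
    ring

theorem cantorInt_pow_mul_add_pow_sub_one (hs : 1 < s) (k n : ℕ) :
    cantorInt p s h (s ^ k * n + s ^ k - 1) =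
      h (s - 1) * ∑ i ∈ Finset.range k, p ^ i + p ^ k * cantorInt p s h n := by
  rw [cantorInt, Nat.digits_pow_mul_add_pow_sub_one hs, foldr_replicate_append]
  rfl

theorem cantorInt_pow_mul_add_pow_sub_one_lt (hs : 1 < s) (hp : h (s - 1) < p) (k n : ℕ) :
    cantorInt p s h (s ^ k * n + s ^ k - 1) < p ^ k * (cantorInt p s h n + 1) := by
  have hgeom : h (s - 1) * ∑ i ∈ Finset.range k, p ^ i ≤ p ^ k - 1 := by
    rw [← geom_sum_mul_of_one_le (by omega : 1 ≤ p), mul_comm]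
    exact Nat.mul_le_mul_left _ (by omega)
  have hpk : 1 ≤ p ^ k := Nat.one_le_pow _ _ (by omega)
  rw [cantorInt_pow_mul_add_pow_sub_one h hs, mul_add, mul_one]
  omega

theorem ofDigits_le_foldr (hsp : s ≤ p) (L : List ℕ) (hL : ∀ d ∈ L, d ≤ h d) :
    Nat.ofDigits s L ≤ L.foldr (fun d acc => h d + p * acc) 0 := by
  induction L with
  | nil => simp [Nat.ofDigits]
  | cons d L ih =>
    rw [Nat.ofDigits_cons, List.foldr_cons]
    exact Nat.add_le_add (hL d (by simp))
      (Nat.mul_le_mul hsp (ih fun x hx => hL x (by simp [hx])))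

theorem self_le_cantorInt (hs : 1 < s) (hsp : s ≤ p) (hmono : StrictMonoOn h (Set.Iio s))
    (n : ℕ) : n ≤ cantorInt p s h n := by
  have hid : ∀ d < s, d ≤ h d := fun d hd =>
    (hmono.mono (Set.Iic_subset_Iio.mpr (by omega))).Iic_id_le (n := s - 1) d (by omega)
  have := ofDigits_le_foldr h hsp (Nat.digits s n) fun d hd => hid d (Nat.digits_lt_base hs hd)
  rwa [Nat.ofDigits_digits] at this

end CantorInt

theorem pow_rpow_logb {b x : ℝ} (hb : 0 < b) (hb1 : b ≠ 1) (hx : 0 < x) (k : ℕ) :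
    (b ^ k) ^ logb b x = x ^ k := by
  rw [← rpow_natCast_mul hb.le, mul_comm, rpow_mul_natCast hb.le, rpow_logb hb hb1 hx]

theorem cast_pow_mul_add_pow_sub_one_rpow_logb {s : ℕ} (hs : 1 < s) {x : ℝ} (hx : 0 < x)
    (k n : ℕ) :
    ((s ^ k * n + s ^ k - 1 : ℕ) : ℝ) ^ logb s x =
      x ^ k * (n + (1 - (s : ℝ) ^ (-(k : ℝ)))) ^ logb s x := by
  have hs1 : (1 : ℝ) < s := by exact_mod_cast hs
  have hpow : (s : ℝ) ^ (-(k : ℝ)) * s ^ k = 1 := by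
    rw [rpow_neg (by positivity), rpow_natCast, inv_mul_cancel₀ (by positivity)]
  have hcast : ((s ^ k * n + s ^ k - 1 : ℕ) : ℝ) = s ^ k * (n + (1 - (s : ℝ) ^ (-(k : ℝ)))) := by
    have := Nat.one_le_pow k s (by omega)
    rw [Nat.cast_sub (by omega)]
    push_cast
    linear_combination hpow
  have hpow_le : (s : ℝ) ^ (-(k : ℝ)) ≤ 1 :=
    rpow_le_one_of_one_le_of_nonpos hs1.le (by simp)
  rw [hcast, mul_rpow (by positivity) (by linarith [n.cast_nonneg (α := ℝ)]),
    pow_rpow_logb (by positivity) hs1.ne' hx]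

theorem one_lt_logb_mul_of_logb_lt {b x t : ℝ} (hb : 1 < b) (hbx : b < x) (ht : logb x b < t) :
    1 < logb b x * t := by
  have hpos : 0 < logb x b := logb_pos (hb.trans hbx) hb
  have : logb b x * logb x b = 1 := by
    rw [← inv_logb x b]
    exact inv_mul_cancel₀ hpos.ne'
  nlinarith

theorem add_one_mul_rpow_le_mul_rpow_add {a x t α : ℝ} (hx : 0 < x) (hxa : x ≤ a)
    (hα : 1 ≤ α) (ht : 0 ≤ t) (hαt : 1 ≤ α * t) :
    (a + 1) * x ^ α ≤ a * (x + t) ^ α := by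
  have hbern : x ^ α * (1 + α * (t / x)) ≤ (x + t) ^ α := by
    have : x + t = x * (1 + t / x) := by field_simp
    rw [this, mul_rpow hx.le (by positivity)]
    exact mul_le_mul_of_nonneg_left
      (one_add_mul_self_le_rpow_one_add (by linarith [div_nonneg ht hx.le]) hα) (by positivity)
  have hfrac : 1 ≤ a * (α * (t / x)) := by
    rw [show a * (α * (t / x)) = a / x * (α * t) by ring]
    nlinarith [(one_le_div hx).mpr hxa]
  have hxα : 0 < x ^ α := rpow_pos_of_pos hx α
  nlinarith

theorem stmt2_general (p s : ℕ) (h : ℕ → ℕ) (hs : 2 ≤ s) (hp : s < p)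
    (hmono : ∀ i j, i < j → j < s → h i < h j)
    (hrange : ∀ i, i < s → h i < p)
    (n ℓ : ℕ) (hn : 1 ≤ n)
    (hcond : 1 - (s : ℝ) ^ (-(ℓ : ℝ)) > Real.logb p s) :
    cantorB p s h (s ^ ℓ * n + s ^ ℓ - 1) < cantorB p s h n := by
  set α := logb s p
  set t := 1 - (s : ℝ) ^ (-(ℓ : ℝ))
  have hs1 : (1 : ℝ) < s := by exact_mod_cast hs
  have hsp : (s : ℝ) < p := by exact_mod_cast hp
  have hn0 : (0 : ℝ) < n := by exact_mod_cast hn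
  have hα : 1 < α := by
    simpa [logb_self_eq_one hs1] using logb_lt_logb hs1 (by positivity) hsp
  have ht : 0 < t := (logb_pos (hs1.trans hsp) hs1).trans hcond
  have hαt : 1 < α * t := one_lt_logb_mul_of_logb_lt hs1 hsp hcond
  have hlt : (cantorInt p s h (s ^ ℓ * n + s ^ ℓ - 1) : ℝ) < p ^ ℓ * (cantorInt p s h n + 1) := by
    exact_mod_cast cantorInt_pow_mul_add_pow_sub_one_lt h hs (hrange _ (by omega)) ℓ n
  have hle : (n : ℝ) ≤ cantorInt p s h n := by
    exact_mod_cast self_le_cantorInt h hs hp.le (fun i _ j hj hij => hmono i j hij hj) n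
  have key := add_one_mul_rpow_le_mul_rpow_add hn0 hle hα.le ht.le hαt.le
  rw [cantorB, cantorB, cast_pow_mul_add_pow_sub_one_rpow_logb hs (by linarith), div_lt_div_iff₀
    (mul_pos (pow_pos (by linarith) ℓ) (rpow_pos_of_pos (add_pos hn0 ht) α)) (rpow_pos_of_pos hn0 α)]
  calc
    _ < p ^ ℓ * (cantorInt p s h n + 1) * (n : ℝ) ^ α := by gcongr
    _ ≤ cantorInt p s h n * (p ^ ℓ * (n + t) ^ α) := by nlinarith [key]

theorem stmt2 (p s : ℕ) (h : ℕ → ℕ) (hs : 2 ≤ s) (hp : s < p)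
    (hmono : ∀ i j, i < j → j < s → h i < h j)
    (hrange : ∀ i, i < s → h i < p)
    (n ℓ : ℕ) (hn : 1 ≤ n) (hℓ : 1 ≤ ℓ)
    (hcond : 1 - (s : ℝ) ^ (-(ℓ : ℝ)) > Real.logb p s) :
    cantorB p s h (s ^ ℓ * n + s ^ ℓ - 1) < cantorB p s h n :=
  stmt2_general p s h hs hp hmono hrange n ℓ hn hcond
end

section
/- For every α ∈ [m, M], the function x ↦ 𝟙_{E_α}(x)/x is Riemann integrable on [1/s, 1), where E_α = {x ∈ [1/s, 1) : λ(x) ≤ α}; equivalently, the set of discontinuity points of 𝟙_{E_α}(x)/x in [1/s,1) has Lebesgue measure zero. -/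
open Real Filter Set MeasureTheory Topology
open scoped Classical ENNReal

theorem continuousWithinAt_indicator_setOf_le {X α M : Type*} [TopologicalSpace X]
    [TopologicalSpace α] [LinearOrder α] [OrderClosedTopology α] [TopologicalSpace M] [Zero M]
    {φ ψ : X → α} {g : X → M} {S : Set X} {x : X} (hx : x ∈ S)
    (hφ : ContinuousWithinAt φ S x) (hψ : ContinuousWithinAt ψ S x)
    (hg : ContinuousWithinAt g S x) (hne : φ x ≠ ψ x) :
    ContinuousWithinAt ({y | y ∈ S ∧ φ y ≤ ψ y}.indicator g) S x := by
  set T := {y | y ∈ S ∧ φ y ≤ ψ y}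
  rcases hne.lt_or_gt with hlt | hgt
  · refine hg.congr_of_eventuallyEq ?_ (indicator_of_mem (show x ∈ T from ⟨hx, hlt.le⟩) g)
    filter_upwards [hφ.eventually_lt hψ hlt, self_mem_nhdsWithin] with y hy hyS
    exact indicator_of_mem (show y ∈ T from ⟨hyS, hy.le⟩) g
  · refine (continuousWithinAt_const (b := (0 : M))).congr_of_eventuallyEq ?_
      (indicator_of_notMem (show x ∉ T from fun h => h.2.not_gt hgt) g)
    filter_upwards [hψ.eventually_lt hφ hgt] with y hy
    exact indicator_of_notMem (show y ∉ T from fun h => h.2.not_gt hy) g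

theorem volume_setOf_eq_mul_rpow_eq_zero {f : ℝ → ℝ} {S : Set ℝ} {θ α : ℝ} (hθ : θ ≠ 0)
    (hS : S ⊆ Ioi 0) (hpos : ∀ x ∈ S, 0 < f x) (hf : volume (f '' S) = 0) :
    volume {x | x ∈ S ∧ f x = α * x ^ θ} = 0 := by
  rcases le_or_gt α 0 with hα | hα
  · refine measure_mono_null (fun x hx => ?_) measure_empty
    have := hx.2 ▸ hpos x hx.1
    exact (mul_nonpos_of_nonpos_of_nonneg hα (rpow_nonneg (le_of_lt (hS hx.1)) θ)).not_gt this
  · set g : ℝ → ℝ := fun y => (y / α) ^ θ⁻¹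
    have hg : DifferentiableOn ℝ g (f '' S) := by
      rintro _ ⟨x, hx, rfl⟩
      have hdiv : DifferentiableAt ℝ (fun y : ℝ => y / α) (f x) := differentiableAt_id.div_const α
      exact (hdiv.rpow_const (Or.inl (div_pos (hpos x hx) hα).ne')).differentiableWithinAt
    refine measure_mono_null ?_
      (addHaar_image_eq_zero_of_differentiableOn_of_addHaar_eq_zero volume hg hf)
    rintro x ⟨hxS, hfx⟩
    refine ⟨f x, mem_image_of_mem f hxS, ?_⟩
    simp only [g, hfx, mul_div_cancel_left₀ _ hα.ne']
    exact rpow_rpow_inv (le_of_lt (hS hxS)) hθ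

section CantorInt

variable {p s : ℕ} {h : ℕ → ℕ}

@[simp]
theorem cantorInt_zero : cantorInt p s h 0 = 0 := by simp [cantorInt]

theorem cantorInt_mul_add (hs : 1 < s) {q d : ℕ} (hd : d < s) (hn : s * q + d ≠ 0) :
    cantorInt p s h (s * q + d) = h d + p * cantorInt p s h q := by
  have hmod : (s * q + d) % s = d := by rw [Nat.mul_add_mod, Nat.mod_eq_of_lt hd]
  have hdiv : (s * q + d) / s = q := by
    rw [Nat.mul_add_div (by omega), Nat.div_eq_of_lt hd, add_zero]
  rw [cantorInt, Nat.digits_def' hs (Nat.pos_of_ne_zero hn), hmod, hdiv]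
  rfl

theorem cantorInt_mul_add_le (hs : 1 < s) {q d : ℕ} (hd : d < s) :
    cantorInt p s h (s * q + d) ≤ h d + p * cantorInt p s h q := by
  rcases eq_or_ne (s * q + d) 0 with hn | hn
  · simp [hn]
  · exact (cantorInt_mul_add hs hd hn).le

theorem cantorInt_lt_succ (hs : 1 < s) (hmono : ∀ i j, i < j → j < s → h i < h j)
    (hrange : ∀ i, i < s → h i < p) (n : ℕ) :
    cantorInt p s h n < cantorInt p s h (n + 1) := by
  induction n using Nat.strong_induction_on with
  | _ n ih =>
  obtain ⟨q, d, hd, rfl⟩ : ∃ q d, d < s ∧ n = s * q + d :=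
    ⟨n / s, n % s, Nat.mod_lt _ (by omega), (Nat.div_add_mod n s).symm⟩
  have hle := cantorInt_mul_add_le (p := p) (h := h) hs hd (q := q)
  rcases Nat.lt_or_ge (d + 1) s with hd1 | hd1
  · rw [add_assoc, cantorInt_mul_add hs hd1 (by omega)]
    have := hmono d (d + 1) (by omega) hd1
    omega
  · have hsucc : s * q + d + 1 = s * (q + 1) + 0 := by rw [mul_add]; omega
    have hq : cantorInt p s h q < cantorInt p s h (q + 1) := ih q (by nlinarith)
    rw [hsucc, cantorInt_mul_add (q := q + 1) hs (by omega) (by simp; omega)]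
    have := hrange d hd
    nlinarith

theorem cantorInt_strictMono (hs : 1 < s) (hmono : ∀ i j, i < j → j < s → h i < h j)
    (hrange : ∀ i, i < s → h i < p) : StrictMono (cantorInt p s h) :=
  strictMono_nat_of_lt_succ (cantorInt_lt_succ hs hmono hrange)

theorem cantorInt_div_bounds (hs : 1 < s) (hrange : ∀ i, i < s → h i < p) {n : ℕ} (hn : n ≠ 0) :
    p * cantorInt p s h (n / s) ≤ cantorInt p s h n ∧
      cantorInt p s h n < p * (cantorInt p s h (n / s) + 1) := by
  have hsum : s * (n / s) + n % s = n := Nat.div_add_mod n s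
  have hd : n % s < s := Nat.mod_lt _ (by omega)
  have hdp := hrange _ hd
  have key := cantorInt_mul_add (p := p) (h := h) hs hd (q := n / s) (by omega)
  rw [hsum] at key
  rw [key]
  constructor <;> nlinarith

theorem cantorA_mul_bounds (hs : 1 < s) (hrange : ∀ i, i < s → h i < p) {y : ℝ}
    (hy : 1 ≤ s * y) :
    p * cantorA p s h y ≤ cantorA p s h (s * y) ∧
      cantorA p s h (s * y) + 1 ≤ p * (cantorA p s h y + 1) := by
  have hfloor : ⌊(s : ℝ) * y⌋₊ / s = ⌊y⌋₊ := by
    rw [← Nat.floor_div_natCast, mul_div_cancel_left₀ _ (by positivity)]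
  have hn : ⌊(s : ℝ) * y⌋₊ ≠ 0 := Nat.one_le_iff_ne_zero.mp ((Nat.one_le_floor_iff _).mpr hy)
  obtain ⟨hlo, hhi⟩ := cantorInt_div_bounds (p := p) (h := h) hs hrange hn
  rw [hfloor] at hlo hhi
  unfold cantorA
  exact ⟨by exact_mod_cast hlo, by exact_mod_cast hhi⟩

theorem cantorA_div_pow_mem_Icc (hs : 1 < s) (hp : 1 < p) (hrange : ∀ i, i < s → h i < p)
    {x l : ℝ} (hx : 1 ≤ s * x)
    (hl : Tendsto (fun k : ℕ => cantorA p s h ((s : ℝ) ^ k * x) / (p : ℝ) ^ k) atTop (𝓝 l))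
    (k : ℕ) :
    l ∈ Icc (cantorA p s h ((s : ℝ) ^ k * x) / (p : ℝ) ^ k)
      ((cantorA p s h ((s : ℝ) ^ k * x) + 1) / (p : ℝ) ^ k) := by
  have hp1 : (1 : ℝ) < p := by exact_mod_cast hp
  have hx0 : 0 ≤ x := (pos_of_mul_pos_right (zero_lt_one.trans_le hx) (Nat.cast_nonneg s)).le
  have hbounds (k : ℕ) := cantorA_mul_bounds (p := p) (h := h) hs hrange (y := (s : ℝ) ^ k * x)
    (hx.trans (by gcongr; exact le_mul_of_one_le_left hx0 (one_le_pow₀ (by exact_mod_cast hs.le))))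
  have hpow (k : ℕ) : (s : ℝ) ^ (k + 1) * x = s * ((s : ℝ) ^ k * x) := by ring
  have hlower : Monotone fun k : ℕ => cantorA p s h ((s : ℝ) ^ k * x) / (p : ℝ) ^ k := by
    refine monotone_nat_of_le_succ fun k => ?_
    rw [hpow, pow_succ, div_le_div_iff₀ (by positivity) (by positivity)]
    nlinarith [(hbounds k).1, pow_pos (zero_lt_one.trans hp1) k]
  have hupper : Antitone fun k : ℕ => (cantorA p s h ((s : ℝ) ^ k * x) + 1) / (p : ℝ) ^ k := by
    refine antitone_nat_of_succ_le fun k => ?_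
    rw [hpow, pow_succ, div_le_div_iff₀ (by positivity) (by positivity)]
    nlinarith [(hbounds k).2, pow_pos (zero_lt_one.trans hp1) k]
  have hl' : Tendsto (fun k : ℕ => (cantorA p s h ((s : ℝ) ^ k * x) + 1) / (p : ℝ) ^ k)
      atTop (𝓝 l) := by
    have hgeom := tendsto_pow_atTop_nhds_zero_of_lt_one (inv_nonneg.mpr (zero_le_one.trans hp1.le))
      (inv_lt_one_of_one_lt₀ hp1)
    simpa [add_div, inv_pow] using hl.add hgeom
  exact ⟨hlower.ge_of_tendsto hl k, hupper.le_of_tendsto hl' k⟩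

theorem tendsto_cantorA_div_pow_of_tendsto (hs : 1 < s) (hp : 0 < p) {x l : ℝ} (hx : 0 < x)
    (hl : Tendsto (fun k : ℕ => cantorA p s h ((s : ℝ) ^ k * x) / ((s : ℝ) ^ k * x) ^ logb s p)
      atTop (𝓝 l)) :
    Tendsto (fun k : ℕ => cantorA p s h ((s : ℝ) ^ k * x) / (p : ℝ) ^ k) atTop
      (𝓝 (x ^ logb s p * l)) := by
  have hs0 : (0 : ℝ) < s := by positivity
  have hpow (k : ℕ) : ((s : ℝ) ^ k * x) ^ logb s p = (p : ℝ) ^ k * x ^ logb s p := by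
    rw [mul_rpow (by positivity) hx.le, ← rpow_pow_comm hs0.le,
      rpow_logb hs0 (by exact_mod_cast hs.ne') (by exact_mod_cast hp)]
  refine (hl.const_mul (x ^ logb s p)).congr fun k => ?_
  have : 0 < x ^ logb s p := rpow_pos_of_pos hx _
  rw [hpow]
  field_simp

theorem cantorA_mono (ha : Monotone (cantorInt p s h)) : Monotone (cantorA p s h) :=
  fun _ _ hxy => Nat.cast_le.mpr (ha (Nat.floor_mono hxy))

variable {L : ℝ → ℝ}

theorem monotoneOn_of_tendsto_cantorA_div_pow (ha : Monotone (cantorInt p s h)) {T : Set ℝ}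
    (hL : ∀ x ∈ T,
      Tendsto (fun k : ℕ => cantorA p s h ((s : ℝ) ^ k * x) / (p : ℝ) ^ k) atTop (𝓝 (L x))) :
    MonotoneOn L T := by
  intro x hx y hy hxy
  refine le_of_tendsto_of_tendsto' (hL x hx) (hL y hy) fun k => ?_
  exact div_le_div_of_nonneg_right
    (cantorA_mono ha (mul_le_mul_of_nonneg_left hxy (by positivity))) (by positivity)

theorem pos_of_tendsto_cantorA_div_pow (hs : 1 < s) (hp : 1 < p)
    (hrange : ∀ i, i < s → h i < p) (ha : StrictMono (cantorInt p s h)) {x : ℝ}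
    (hx : 1 ≤ s * x)
    (hL : Tendsto (fun k : ℕ => cantorA p s h ((s : ℝ) ^ k * x) / (p : ℝ) ^ k) atTop (𝓝 (L x))) :
    0 < L x := by
  have hfloor : 1 ≤ ⌊(s : ℝ) ^ 1 * x⌋₊ := (Nat.one_le_floor_iff _).mpr (by simpa using hx)
  have h1 := ha (show 0 < ⌊(s : ℝ) ^ 1 * x⌋₊ from hfloor)
  rw [cantorInt_zero] at h1
  refine lt_of_lt_of_le ?_ (cantorA_div_pow_mem_Icc hs hp hrange hx hL 1).1
  exact div_pos (Nat.cast_pos.mpr h1) (by positivity)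

theorem volume_image_Ico_eq_zero_of_tendsto_cantorA_div_pow (hs : 1 < s) (hsp : s < p)
    (hrange : ∀ i, i < s → h i < p)
    (hL : ∀ x ∈ Ico (s⁻¹ : ℝ) 1,
      Tendsto (fun k : ℕ => cantorA p s h ((s : ℝ) ^ k * x) / (p : ℝ) ^ k) atTop (𝓝 (L x))) :
    volume (L '' Ico (s⁻¹ : ℝ) 1) = 0 := by
  have hs0 : (0 : ℝ) < s := by exact_mod_cast (show 0 < s by omega)
  have hp0 : (0 : ℝ) < p := by exact_mod_cast (show 0 < p by omega)
  have hcover (k : ℕ) : L '' Ico (s⁻¹ : ℝ) 1 ⊆ ⋃ n ∈ Finset.range (s ^ k),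
      Icc ((cantorInt p s h n : ℝ) / (p : ℝ) ^ k)
        (((cantorInt p s h n : ℝ) + 1) / (p : ℝ) ^ k) := by
    rintro _ ⟨x, hx, rfl⟩
    have hsx : 1 ≤ s * x := by
      have := mul_le_mul_of_nonneg_left hx.1 hs0.le
      rwa [mul_inv_cancel₀ hs0.ne'] at this
    refine mem_biUnion (x := ⌊(s : ℝ) ^ k * x⌋₊) ?_
      (cantorA_div_pow_mem_Icc hs (hs.trans hsp) hrange hsx (hL x hx) k)
    have hx0 : 0 ≤ x := (inv_nonneg.mpr hs0.le).trans hx.1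
    rw [Finset.mem_coe, Finset.mem_range, Nat.floor_lt (by positivity)]
    push_cast
    exact mul_lt_of_lt_one_right (by positivity) hx.2
  have hbound (k : ℕ) : volume (L '' Ico (s⁻¹ : ℝ) 1) ≤ ENNReal.ofReal (((s : ℝ) / p) ^ k) := by
    calc volume (L '' Ico (s⁻¹ : ℝ) 1)
        ≤ ∑ n ∈ Finset.range (s ^ k), volume (Icc ((cantorInt p s h n : ℝ) / (p : ℝ) ^ k)
            (((cantorInt p s h n : ℝ) + 1) / (p : ℝ) ^ k)) :=
          (measure_mono (hcover k)).trans (measure_biUnion_finset_le _ _)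
      _ = ENNReal.ofReal (((s : ℝ) / p) ^ k) := by
          simp only [Real.volume_Icc, add_div, add_sub_cancel_left, Finset.sum_const,
            Finset.card_range, nsmul_eq_mul]
          rw [← ENNReal.ofReal_natCast, ← ENNReal.ofReal_mul (by positivity), div_pow]
          push_cast
          ring_nf
  have hlim : Tendsto (fun k : ℕ => ENNReal.ofReal (((s : ℝ) / p) ^ k)) atTop (𝓝 0) := by
    rw [← ENNReal.ofReal_zero]
    refine ENNReal.tendsto_ofReal (tendsto_pow_atTop_nhds_zero_of_lt_one (by positivity) ?_)
    rw [div_lt_one hp0]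
    exact_mod_cast hsp
  exact nonpos_iff_eq_zero.mp (ge_of_tendsto' hlim hbound)

end CantorInt

theorem stmt13_general (p s : ℕ) (h : ℕ → ℕ) (hs : 2 ≤ s) (hp : s < p)
    (hmono : ∀ i j, i < j → j < s → h i < h j)
    (hrange : ∀ i, i < s → h i < p)
    (m M : ℝ)
    (lam : ℝ → ℝ)
    (hlam : ∀ x : ℝ, 0 < x →
      Tendsto (fun k : ℕ => cantorA p s h ((s : ℝ) ^ k * x) / ((s : ℝ) ^ k * x) ^ Real.logb s p)
        atTop (nhds (lam x))) :
    ∀ α ∈ Set.Icc m M,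
      volume {x : ℝ | x ∈ Set.Ico ((s : ℝ)⁻¹) 1 ∧
        ¬ ContinuousWithinAt
            (Set.indicator {y : ℝ | y ∈ Set.Ico ((s : ℝ)⁻¹) 1 ∧ lam y ≤ α} (fun y => 1 / y))
            (Set.Ico ((s : ℝ)⁻¹) 1) x} = 0 := by
  intro α _
  set S := Ico ((s : ℝ)⁻¹) 1
  set θ := logb s p
  set L : ℝ → ℝ := fun x => x ^ θ * lam x
  have hs1 : 1 < s := by omega
  have hθ : 0 < θ := logb_pos (by exact_mod_cast hs1) (by exact_mod_cast hs1.trans hp)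
  have hSpos : S ⊆ Ioi 0 := fun x hx => (inv_pos.mpr (by positivity)).trans_le hx.1
  have hsx (x : ℝ) (hx : x ∈ S) : 1 ≤ s * x := by
    simpa [mul_inv_cancel₀ (by positivity : (s : ℝ) ≠ 0)] using
      mul_le_mul_of_nonneg_left hx.1 (Nat.cast_nonneg s)
  have hL (x : ℝ) (hx : x ∈ S) :
      Tendsto (fun k : ℕ => cantorA p s h ((s : ℝ) ^ k * x) / (p : ℝ) ^ k) atTop (𝓝 (L x)) :=
    tendsto_cantorA_div_pow_of_tendsto hs1 (by omega) (hSpos hx) (hlam x (hSpos hx))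
  have ha := cantorInt_strictMono hs1 hmono hrange
  have hjumps : volume {x | x ∈ S ∧ ¬ContinuousWithinAt L S x} = 0 :=
    (monotoneOn_of_tendsto_cantorA_div_pow ha.monotone hL).countable_not_continuousWithinAt
      |>.measure_zero _
  have hlevel : volume {x | x ∈ S ∧ L x = α * x ^ θ} = 0 :=
    volume_setOf_eq_mul_rpow_eq_zero hθ.ne' hSpos
      (fun x hx => pos_of_tendsto_cantorA_div_pow hs1 (by omega) hrange ha (hsx x hx) (hL x hx))
      (volume_image_Ico_eq_zero_of_tendsto_cantorA_div_pow hs1 hp hrange hL)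
  refine measure_mono_null (fun x ⟨hxS, hdisc⟩ => ?_) (measure_union_null hjumps hlevel)
  by_contra hx
  simp only [mem_union, mem_ofPred_eq, not_or, not_and, not_not] at hx
  have hE : {y | y ∈ S ∧ lam y ≤ α} = {y | y ∈ S ∧ L y ≤ α * y ^ θ} := by
    ext y
    refine and_congr_right fun hy => ?_
    rw [mul_comm α, mul_le_mul_iff_right₀ (rpow_pos_of_pos (hSpos hy) θ)]
  rw [hE] at hdisc
  exact hdisc <| continuousWithinAt_indicator_setOf_le hxS (hx.1 hxS)
    (continuousAt_const.mul (continuousAt_rpow_const x θ (Or.inr hθ.le))).continuousWithinAt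
    (continuousAt_const.div continuousAt_id (hSpos hxS).ne').continuousWithinAt (hx.2 hxS)

theorem stmt13 (p s : ℕ) (h : ℕ → ℕ) (hs : 2 ≤ s) (hp : s < p)
    (hmono : ∀ i j, i < j → j < s → h i < h j)
    (hrange : ∀ i, i < s → h i < p)
    (m M : ℝ) (hm : m = sInf {x : ℝ | ∃ n : ℕ, 1 ≤ n ∧ cantorB p s h n = x})
    (hM : M = sSup {x : ℝ | ∃ n : ℕ, 1 ≤ n ∧ cantorB p s h n = x})
    (lam : ℝ → ℝ)
    (hlam : ∀ x : ℝ, 0 < x →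
      Tendsto (fun k : ℕ => cantorA p s h ((s : ℝ) ^ k * x) / ((s : ℝ) ^ k * x) ^ Real.logb s p)
        atTop (nhds (lam x))) :
    ∀ α ∈ Set.Icc m M,
      volume {x : ℝ | x ∈ Set.Ico ((s : ℝ)⁻¹) 1 ∧
        ¬ ContinuousWithinAt
            (Set.indicator {y : ℝ | y ∈ Set.Ico ((s : ℝ)⁻¹) 1 ∧ lam y ≤ α} (fun y => 1 / y))
            (Set.Ico ((s : ℝ)⁻¹) 1) x} = 0 :=
  stmt13_general p s h hs hp hmono hrange m M lam hlam
end
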